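/- arXiv:1210.0827 — 2 statements merged into one kernel-verified Lean document; each statement's English description precedes it below -/
import Mathlib

section
/- Let U, V be abelian groups and S any subset of End(U) × End(V)^op. Then K(Adj(⊗_S)) = K(S); equivalently, the tensor-product bimap ⊗_{Adj(⊗_S)} is factor equivalent to ⊗_S. -/
open scoped TensorProduct

namespace TensorBimap

variable {U V W X Y : Type*} [AddCommGroup U] [AddCommGroup V] [AddCommGroup W]
  [AddCommGroup X] [AddCommGroup Y]

/-- A bimap is *full* if its values generate the codomain. -/
def IsFull (b : U →+ V →+ W) : Prop :=
  AddSubgroup.closure {w : W | ∃ u v, b u v = w} = ⊤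

/-- The adjoint set of a bimap. -/
def Adj (b : U →+ V →+ W) : Set (AddMonoid.End U × AddMonoid.End V) :=
  {p | ∀ u v, b (p.1 u) v = b u (p.2 v)}

/-- Composition of a bimap with an additive map on the codomain. -/
def comp₂ (τ : W →+ X) (b : U →+ V →+ W) : U →+ V →+ X where
  toFun u := τ.comp (b u)
  map_zero' := by ext v; simp
  map_add' u u' := by ext v; simp

/-- The canonical bimap into the tensor product over ℤ. -/
noncomputable def tmulHom : U →+ V →+ U ⊗[ℤ] V where
  toFun u := (TensorProduct.mk ℤ U V u).toAddMonoidHom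
  map_zero' := by ext v; simp
  map_add' u u' := by ext v; simp [TensorProduct.add_tmul]

/-- The unique additive map `U ⊗ V →+ W` through which a bimap factors. -/
noncomputable def hat (b : U →+ V →+ W) : U ⊗[ℤ] V →+ W :=
  (TensorProduct.lift (LinearMap.mk₂ ℤ (fun u v => b u v)
      (fun u u' v => by simp)
      (fun c u v => by simp)
      (fun u v v' => by simp)
      (fun c u v => by simp))).toAddMonoidHom

/-- The subgroup `K(S)` of the tensor product. -/
noncomputable def K (S : Set (AddMonoid.End U × AddMonoid.End V)) : AddSubgroup (U ⊗[ℤ] V) :=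
  AddSubgroup.closure {t | ∃ p ∈ S, ∃ u v, t = (p.1 u) ⊗ₜ[ℤ] v - u ⊗ₜ[ℤ] (p.2 v)}

/-- The tensor-product bimap `⊗_S : U × V → (U ⊗ V)/K(S)`. -/
noncomputable def tmulBimap (S : Set (AddMonoid.End U × AddMonoid.End V)) :
    U →+ V →+ (U ⊗[ℤ] V) ⧸ K S :=
  comp₂ (QuotientAddGroup.mk' (K S)) tmulHom

/-- `d` factors through `b`. -/
def FactorsThrough (b : U →+ V →+ X) (d : U →+ V →+ Y) : Prop :=
  ∃ τ : X →+ Y, ∀ u v, d u v = τ (b u v)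


theorem tmulBimap_apply (S : Set (AddMonoid.End U × AddMonoid.End V)) (u : U) (v : V) :
    tmulBimap S u v = QuotientAddGroup.mk (s := K S) (u ⊗ₜ[ℤ] v) :=
  rfl

theorem K_mono {S T : Set (AddMonoid.End U × AddMonoid.End V)} (h : S ⊆ T) : K S ≤ K T :=
  AddSubgroup.closure_mono fun _ ⟨p, hp, u, v, ht⟩ => ⟨p, h hp, u, v, ht⟩

theorem K_le_iff {S : Set (AddMonoid.End U × AddMonoid.End V)} {H : AddSubgroup (U ⊗[ℤ] V)} :
    K S ≤ H ↔ ∀ p ∈ S, ∀ u v, (p.1 u) ⊗ₜ[ℤ] v - u ⊗ₜ[ℤ] (p.2 v) ∈ H := by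
  rw [K, AddSubgroup.closure_le]
  constructor
  · exact fun h p hp u v => h ⟨p, hp, u, v, rfl⟩
  · rintro h _ ⟨p, hp, u, v, rfl⟩
    exact h p hp u v

theorem mem_Adj_tmulBimap_iff {S : Set (AddMonoid.End U × AddMonoid.End V)}
    {p : AddMonoid.End U × AddMonoid.End V} :
    p ∈ Adj (tmulBimap S) ↔ ∀ u v, (p.1 u) ⊗ₜ[ℤ] v - u ⊗ₜ[ℤ] (p.2 v) ∈ K S := by
  simp only [Adj, Set.mem_ofPred_eq, tmulBimap_apply, QuotientAddGroup.eq_iff_sub_mem]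

theorem K_le_K_iff_subset_Adj_tmulBimap {S T : Set (AddMonoid.End U × AddMonoid.End V)} :
    K T ≤ K S ↔ T ⊆ Adj (tmulBimap S) := by
  simp only [K_le_iff, Set.subset_def, mem_Adj_tmulBimap_iff]

/-- `K(Adj(⊗_S)) = K(S)`; equivalently `⊗_{Adj(⊗_S)}` is factor
equivalent to `⊗_S`. -/
theorem statement2 {U V : Type*} [AddCommGroup U] [AddCommGroup V]
    (S : Set (AddMonoid.End U × AddMonoid.End V)) :
    K (Adj (tmulBimap S)) = K S :=
  le_antisymm (K_le_K_iff_subset_Adj_tmulBimap.2 subset_rfl)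
    (K_mono (K_le_K_iff_subset_Adj_tmulBimap.1 le_rfl))

end TensorBimap
end

section
/- Let k be a field, a, b positive integers, W a k-subspace of M_{a×b}(k), and let A ⊆ M_{a+b}(k) × M_{a+b}(k)^op be the set of all pairs ( [[α·1_a, Z],[0, β·1_b]], [[α·1_a, 0],[Zᵗ, β·1_b]] ) with α, β ∈ k, Z ∈ W. For F ∈ GL_a(k) and G ∈ GL_b(k), set P = diag(F, G⁻ᵗ) and Q = diag(F⁻ᵗ, G) in GL_{a+b}(k), where G⁻ᵗ denotes inverse transpose. Then (P⁻¹xP, Q⁻¹yQ) ∈ A for all (x, y) ∈ A if and only if F·W·Gᵗ = W as subspaces of M_{a×b}(k). -/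
/-!
Conjugating the pair of `A` with parameters `(α, β, Z)` by `(P, Q)` gives the pair with parameters
`(α, β, F⁻¹ Z G⁻ᵀ)`. So the conjugation preserves `A` exactly when `W` is stable under
`Z ↦ F⁻¹ Z G⁻ᵀ`, i.e. when `W ⊆ F W Gᵀ`; as `Z ↦ F Z Gᵀ` is injective, both sides have the same
dimension and the inclusion is an equality.
-/

open MulOpposite Matrix

namespace BlockAlg

variable {k : Type*} [Field k] {a b : ℕ}

/-- The set `A` of pairs `([[α1, Z],[0, β1]], [[α1, 0],[Zᵗ, β1]])` with
`α, β ∈ k` and `Z ∈ W`, inside `M_{a+b}(k) × M_{a+b}(k)ᵒᵖ`. -/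
def Aset (W : Submodule k (Matrix (Fin a) (Fin b) k)) :
    Set (Matrix (Fin a ⊕ Fin b) (Fin a ⊕ Fin b) k ×
      (Matrix (Fin a ⊕ Fin b) (Fin a ⊕ Fin b) k)ᵐᵒᵖ) :=
  {p | ∃ α β : k, ∃ Z ∈ W,
    p.1 = Matrix.fromBlocks (α • 1) Z 0 (β • 1) ∧
    p.2 = op (Matrix.fromBlocks (α • 1) 0 Zᵀ (β • 1))}

/-- The set `{([[0, Z],[0, 0]], [[0, 0],[Zᵗ, 0]]) : Z ∈ W}`. -/
def Jset (W : Submodule k (Matrix (Fin a) (Fin b) k)) :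
    Set (Matrix (Fin a ⊕ Fin b) (Fin a ⊕ Fin b) k ×
      (Matrix (Fin a ⊕ Fin b) (Fin a ⊕ Fin b) k)ᵐᵒᵖ) :=
  {p | ∃ Z ∈ W,
    p.1 = Matrix.fromBlocks 0 Z 0 0 ∧
    p.2 = op (Matrix.fromBlocks 0 0 Zᵀ 0)}

theorem _root_.Submodule.map_eq_self_iff_le_map {K V : Type*} [DivisionRing K] [AddCommGroup V]
    [Module K V] [FiniteDimensional K V] (W : Submodule K V) (e : V ≃ₗ[K] V) :
    W.map (e : V →ₗ[K] V) = W ↔ W ≤ W.map (e : V →ₗ[K] V) :=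
  ⟨Eq.ge, fun h => (Submodule.eq_of_le_of_finrank_eq h (e.finrank_map_eq W).symm).symm⟩

section

variable {m n R : Type*} [Fintype m] [Fintype n] [DecidableEq m] [DecidableEq n] [CommRing R]

theorem _root_.Matrix.blockDiag_conj_fromBlocks_smul_one {A A' : Matrix m m R}
    {D D' : Matrix n n R} (hA : A' * A = 1) (hD : D' * D = 1) (α β : R) (Y : Matrix m n R)
    (Z : Matrix n m R) :
    (fromBlocks A 0 0 D)⁻¹ * fromBlocks (α • 1) Y Z (β • 1) * fromBlocks A 0 0 D =
      fromBlocks (α • 1) (A' * Y * D) (D' * Z * A) (β • 1) := by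
  have hinv : (fromBlocks A 0 0 D)⁻¹ = fromBlocks A' 0 0 D' :=
    inv_eq_left_inv <| by simp [fromBlocks_multiply, hA, hD, fromBlocks_one]
  simp [hinv, fromBlocks_multiply, Matrix.mul_smul, hA, hD]

theorem _root_.Matrix.transpose_units_mul_transpose_inv (G : (Matrix n n R)ˣ) :
    (G : Matrix n n R)ᵀ * (↑G⁻¹ : Matrix n n R)ᵀ = 1 := by
  rw [← transpose_mul, Units.inv_mul, transpose_one]

def unitsBimul (F : (Matrix m m R)ˣ) (G : (Matrix n n R)ˣ) :
    Matrix m n R ≃ₗ[R] Matrix m n R where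
  toFun Z := (F : Matrix m m R) * Z * (G : Matrix n n R)ᵀ
  invFun Z := (↑F⁻¹ : Matrix m m R) * Z * (↑G⁻¹ : Matrix n n R)ᵀ
  map_add' X Y := by simp only [Matrix.add_mul, Matrix.mul_add]
  map_smul' c X := by simp only [Matrix.mul_smul, Matrix.smul_mul, RingHom.id_apply]
  left_inv Z := by
    simp only [Matrix.mul_assoc, ← transpose_mul, Units.inv_mul, transpose_one, Matrix.mul_one]
    rw [← Matrix.mul_assoc, Units.inv_mul, Matrix.one_mul]
  right_inv Z := by
    simp only [Matrix.mul_assoc, ← transpose_mul, Units.mul_inv, transpose_one, Matrix.mul_one]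
    rw [← Matrix.mul_assoc, Units.mul_inv, Matrix.one_mul]

def blockPair (α β : R) (Z : Matrix m n R) :
    Matrix (m ⊕ n) (m ⊕ n) R × (Matrix (m ⊕ n) (m ⊕ n) R)ᵐᵒᵖ :=
  (fromBlocks (α • 1) Z 0 (β • 1), op (fromBlocks (α • 1) 0 Zᵀ (β • 1)))

noncomputable def blockConj (F : (Matrix m m R)ˣ) (G : (Matrix n n R)ˣ)
    (p : Matrix (m ⊕ n) (m ⊕ n) R × (Matrix (m ⊕ n) (m ⊕ n) R)ᵐᵒᵖ) :
    Matrix (m ⊕ n) (m ⊕ n) R × (Matrix (m ⊕ n) (m ⊕ n) R)ᵐᵒᵖ :=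
  ((fromBlocks (↑F) 0 0 ((↑G⁻¹)ᵀ))⁻¹ * p.1 * fromBlocks (↑F) 0 0 ((↑G⁻¹)ᵀ),
    op ((fromBlocks ((↑F⁻¹)ᵀ) 0 0 (↑G))⁻¹ * p.2.unop * fromBlocks ((↑F⁻¹)ᵀ) 0 0 (↑G)))

theorem blockConj_blockPair (F : (Matrix m m R)ˣ) (G : (Matrix n n R)ˣ) (α β : R)
    (Z : Matrix m n R) :
    blockConj F G (blockPair α β Z) = blockPair α β ((unitsBimul F G).symm Z) := by
  simp only [blockConj, blockPair, unop_op]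
  rw [blockDiag_conj_fromBlocks_smul_one F.inv_mul (transpose_units_mul_transpose_inv G),
    blockDiag_conj_fromBlocks_smul_one (transpose_units_mul_transpose_inv F) G.inv_mul]
  simp [unitsBimul, transpose_mul, Matrix.mul_assoc]

end

section

variable (W : Submodule k (Matrix (Fin a) (Fin b) k))

theorem mem_Aset_iff
    (p : Matrix (Fin a ⊕ Fin b) (Fin a ⊕ Fin b) k × (Matrix (Fin a ⊕ Fin b) (Fin a ⊕ Fin b) k)ᵐᵒᵖ) :
    p ∈ Aset W ↔ ∃ α β : k, ∃ Z ∈ W, p = blockPair α β Z := by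
  simp [Aset, Prod.ext_iff, blockPair]

theorem blockPair_mem_Aset_iff (α β : k) (Z : Matrix (Fin a) (Fin b) k) :
    blockPair α β Z ∈ Aset W ↔ Z ∈ W := by
  rw [mem_Aset_iff]
  refine ⟨?_, fun hZ => ⟨α, β, Z, hZ, rfl⟩⟩
  rintro ⟨_, _, Z', hZ', h⟩
  obtain ⟨-, rfl, -, -⟩ := fromBlocks_inj.1 (congrArg Prod.fst h)
  exact hZ'

theorem blockConj_mapsTo_Aset_iff (F : (Matrix (Fin a) (Fin a) k)ˣ)
    (G : (Matrix (Fin b) (Fin b) k)ˣ) :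
    (∀ p ∈ Aset W, blockConj F G p ∈ Aset W) ↔
      W ≤ W.map (unitsBimul F G : Matrix (Fin a) (Fin b) k →ₗ[k] Matrix (Fin a) (Fin b) k) := by
  simp only [SetLike.le_def, Submodule.mem_map_equiv]
  constructor
  · intro h Z hZ
    simpa only [blockConj_blockPair, blockPair_mem_Aset_iff] using
      h _ ((blockPair_mem_Aset_iff W 0 0 Z).2 hZ)
  · intro h p hp
    obtain ⟨α, β, Z, hZ, rfl⟩ := (mem_Aset_iff W p).1 hp
    rw [blockConj_blockPair, blockPair_mem_Aset_iff]
    exact h hZ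

end

theorem statement18_general {k : Type*} [Field k] {a b : ℕ}
    (W : Submodule k (Matrix (Fin a) (Fin b) k))
    (F : (Matrix (Fin a) (Fin a) k)ˣ) (G : (Matrix (Fin b) (Fin b) k)ˣ) :
    (∀ p ∈ Aset W,
        ((Matrix.fromBlocks (↑F) 0 0 ((↑G⁻¹)ᵀ))⁻¹ * p.1 *
            Matrix.fromBlocks (↑F) 0 0 ((↑G⁻¹)ᵀ),
          op ((Matrix.fromBlocks ((↑F⁻¹)ᵀ) 0 0 (↑G))⁻¹ * p.2.unop *
            Matrix.fromBlocks ((↑F⁻¹)ᵀ) 0 0 (↑G))) ∈ Aset W) ↔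
      {Y : Matrix (Fin a) (Fin b) k | ∃ Z ∈ W,
        Y = (F : Matrix (Fin a) (Fin a) k) * Z * (G : Matrix (Fin b) (Fin b) k)ᵀ} = ↑W := by
  have hset : {Y : Matrix (Fin a) (Fin b) k | ∃ Z ∈ W,
      Y = (F : Matrix (Fin a) (Fin a) k) * Z * (G : Matrix (Fin b) (Fin b) k)ᵀ} =
        W.map (unitsBimul F G : Matrix (Fin a) (Fin b) k →ₗ[k] Matrix (Fin a) (Fin b) k) := by
    ext Y
    simp [unitsBimul, eq_comm]
  rw [hset, SetLike.coe_set_eq, Submodule.map_eq_self_iff_le_map]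
  exact blockConj_mapsTo_Aset_iff W F G

/-- with `P = diag(F, G⁻ᵗ)` and `Q = diag(F⁻ᵗ, G)`, conjugation
`(x, y) ↦ (P⁻¹xP, Q⁻¹yQ)` maps `A` into itself if and only if `F·W·Gᵗ = W`. -/
theorem statement18 {k : Type*} [Field k] {a b : ℕ} (ha : 0 < a) (hb : 0 < b)
    (W : Submodule k (Matrix (Fin a) (Fin b) k))
    (F : (Matrix (Fin a) (Fin a) k)ˣ) (G : (Matrix (Fin b) (Fin b) k)ˣ) :
    (∀ p ∈ Aset W,
        ((Matrix.fromBlocks (↑F) 0 0 ((↑G⁻¹)ᵀ))⁻¹ * p.1 *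
            Matrix.fromBlocks (↑F) 0 0 ((↑G⁻¹)ᵀ),
          op ((Matrix.fromBlocks ((↑F⁻¹)ᵀ) 0 0 (↑G))⁻¹ * p.2.unop *
            Matrix.fromBlocks ((↑F⁻¹)ᵀ) 0 0 (↑G))) ∈ Aset W) ↔
      {Y : Matrix (Fin a) (Fin b) k | ∃ Z ∈ W,
        Y = (F : Matrix (Fin a) (Fin a) k) * Z * (G : Matrix (Fin b) (Fin b) k)ᵀ} = ↑W :=
  statement18_general W F G

end BlockAlg
end
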